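/- Let s > 0, α, γ ≥ 0, and let f : ℕ → ℝ satisfy |f(n)| ≤ C·R^n for some constants C, R > 0. Define the boundary SIP reservoir generator L^{α,γ} f(n) = α(2s + n)(f(n+1) − f(n)) + γ n (f(n−1) − f(n)), and the Poisson kernel 𝒢f(z) = e^{−z} ∑_{n≥0} (z^n/n!) f(n). Then 𝒢f is twice differentiable on (0,∞) and for all z > 0: 𝒢(L^{α,γ} f)(z) = α z (𝒢f)''(z) + (2sα − (γ − α) z)(𝒢f)'(z). (The boundary generator of the symmetric inclusion process is Poisson-intertwined with the boundary generator of the Brownian energy process.) -/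

import Mathlib

/-!
Write `𝒢f(z) = e^{-z} E_f(z)` with `E_f(z) = ∑ zⁿ/n! f(n)` the exponential generating function,
which is entire when `f` grows at most exponentially. Termwise differentiation gives
`E_f' = E_{f(·+1)}`, hence `(𝒢f)' = 𝒢(Δf)` for the forward difference `Δ`; and an index shift
gives `z 𝒢g(z) = 𝒢(n ↦ n g(n-1))(z)`. Since
`L^{α,γ} f(n) = 2sα Δf(n) + α n Δ²f(n-1) - (γ-α) n Δf(n-1)`,
applying `𝒢` to this identity gives `2sα (𝒢f)' + α z (𝒢f)'' - (γ-α) z (𝒢f)'`.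
-/

open MeasureTheory Real

/-- The Poisson expectation kernel `𝒢f(z) = e^{−z} ∑_{n≥0} (z^n/n!) f(n)`. -/
noncomputable def sipPoissonKernel (f : ℕ → ℝ) (z : ℝ) : ℝ :=
  Real.exp (-z) * ∑' n : ℕ, z ^ n / n.factorial * f n

/-- The boundary (reservoir) generator of the symmetric inclusion process:
`L^{α,γ} f(n) = α(2s+n)(f(n+1) − f(n)) + γ n (f(n−1) − f(n))`. -/
def sipBoundaryGen (s α γ : ℝ) (f : ℕ → ℝ) (n : ℕ) : ℝ :=
  α * (2 * s + n) * (f (n + 1) - f n) + γ * n * (f (n - 1) - f n)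

open fwdDiff

def ExpBounded (f : ℕ → ℝ) : Prop := ∃ C R : ℝ, ∀ n, |f n| ≤ C * R ^ n

noncomputable def egf (f : ℕ → ℝ) (z : ℝ) : ℝ := ∑' n : ℕ, z ^ n / n.factorial * f n

theorem sipPoissonKernel_eq_exp_mul_egf (f : ℕ → ℝ) (z : ℝ) :
    sipPoissonKernel f z = Real.exp (-z) * egf f z := rfl

theorem natCast_add_one_mul_pow_div_factorial_succ (y : ℝ) (n : ℕ) :
    ((n : ℝ) + 1) * y ^ n / (n + 1).factorial = y ^ n / n.factorial := by
  rw [Nat.factorial_succ, Nat.cast_mul, Nat.cast_succ, mul_div_mul_left]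
  positivity

theorem hasSum_natCast_mul_pred_of_hasSum {g : ℕ → ℝ} {z a : ℝ}
    (hg : HasSum (fun n ↦ z ^ n / n.factorial * g n) a) :
    HasSum (fun n ↦ z ^ n / n.factorial * (n * g (n - 1))) (z * a) := by
  have hterm (n : ℕ) : z ^ (n + 1) / (n + 1).factorial * ((n + 1) * g n)
      = z * (z ^ n / n.factorial * g n) := by
    rw [← natCast_add_one_mul_pow_div_factorial_succ z n, pow_succ]
    ring
  rw [← hasSum_nat_add_iff' 1]
  simpa [hterm] using hg.mul_left z

theorem sipBoundaryGen_eq (s α γ : ℝ) (f : ℕ → ℝ) (n : ℕ) :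
    sipBoundaryGen s α γ f n = 2 * s * α * Δ_[1] f n + α * (n * Δ_[1] (Δ_[1] f) (n - 1))
      - (γ - α) * (n * Δ_[1] f (n - 1)) := by
  cases n <;>
    simp only [sipBoundaryGen, fwdDiff, Nat.cast_zero, Nat.cast_succ, Nat.add_sub_cancel] <;> ring

namespace ExpBounded

variable {f : ℕ → ℝ}

theorem natCast : ExpBounded fun n ↦ (n : ℝ) :=
  ⟨1, 2, fun n ↦ by
    rw [Nat.abs_cast, one_mul]
    exact_mod_cast n.lt_two_pow_self.le⟩

theorem comp_succ (hf : ExpBounded f) : ExpBounded fun n ↦ f (n + 1) :=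
  let ⟨C, R, h⟩ := hf
  ⟨C * R, R, fun n ↦ (h (n + 1)).trans_eq (by ring)⟩

theorem fwdDiff (hf : ExpBounded f) : ExpBounded (Δ_[1] f) :=
  let ⟨C, R, h⟩ := hf
  ⟨C * (R + 1), R, fun n ↦ (abs_sub _ _).trans <| (add_le_add (h (n + 1)) (h n)).trans_eq (by ring)⟩

theorem summable_egf (hf : ExpBounded f) (z : ℝ) :
    Summable fun n ↦ z ^ n / n.factorial * f n := by
  obtain ⟨C, R, h⟩ := hf
  refine .of_norm_bounded ((Real.summable_pow_div_factorial (|z| * R)).mul_left C) fun n ↦ ?_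
  rw [Real.norm_eq_abs, abs_mul, abs_div, abs_pow, Nat.abs_cast]
  calc |z| ^ n / n.factorial * |f n| ≤ |z| ^ n / n.factorial * (C * R ^ n) := by gcongr; exact h n
    _ = C * ((|z| * R) ^ n / n.factorial) := by ring

theorem hasSum_egf (hf : ExpBounded f) (z : ℝ) :
    HasSum (fun n ↦ z ^ n / n.factorial * f n) (egf f z) :=
  (hf.summable_egf z).hasSum

theorem hasDerivAt_egf (hf : ExpBounded f) (z : ℝ) :
    HasDerivAt (egf f) (egf (fun n ↦ f (n + 1)) z) z := by
  obtain ⟨C, R, h⟩ := id hf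
  obtain ⟨r, hr, hzr⟩ : ∃ r : ℝ, 1 ≤ r ∧ |z| < r :=
    ⟨|z| + 1, le_add_of_nonneg_left (abs_nonneg z), lt_add_one _⟩
  -- as `r ≥ 1`, the derivative terms on the ball are dominated by the egf of `n ↦ C n Rⁿ` at `r`
  have hbound : ∀ n (y : ℝ), y ∈ Metric.ball 0 r →
      ‖n * y ^ (n - 1) / n.factorial * f n‖ ≤ C * ((r * R) ^ n / n.factorial * n) := by
    intro n y hy
    have hyr : |y| ^ (n - 1) ≤ r ^ n := calc
      |y| ^ (n - 1) ≤ r ^ (n - 1) := by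
        gcongr; simpa [Real.dist_eq] using (Metric.mem_ball.mp hy).le
      _ ≤ r ^ n := pow_le_pow_right₀ hr (Nat.sub_le n 1)
    rw [Real.norm_eq_abs, abs_mul, abs_div, abs_mul, abs_pow, Nat.abs_cast, Nat.abs_cast]
    calc n * |y| ^ (n - 1) / n.factorial * |f n| ≤ n * r ^ n / n.factorial * (C * R ^ n) := by
          gcongr; exact h n
      _ = C * ((r * R) ^ n / n.factorial * n) := by ring
  have hderiv := hasDerivAt_tsum_of_isPreconnected (natCast.summable_egf (r * R) |>.mul_left C)
    Metric.isOpen_ball (convex_ball 0 r).isPreconnected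
    (fun n y _ ↦ ((hasDerivAt_pow n y).div_const n.factorial).mul_const (f n)) hbound
    (Metric.mem_ball_self (by linarith)) (hf.summable_egf 0)
    (by simpa using hzr)
  have hsum : HasSum (fun n ↦ n * z ^ (n - 1) / n.factorial * f n) (egf (fun n ↦ f (n + 1)) z) := by
    rw [← hasSum_nat_add_iff' 1]
    simpa [natCast_add_one_mul_pow_div_factorial_succ] using hf.comp_succ.hasSum_egf z
  rwa [hsum.tsum_eq] at hderiv

theorem egf_fwdDiff (hf : ExpBounded f) (z : ℝ) :
    egf (Δ_[1] f) z = egf (fun n ↦ f (n + 1)) z - egf f z :=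
  (tsum_congr fun _ ↦ mul_sub _ _ _).trans
    ((hf.comp_succ.hasSum_egf z).sub (hf.hasSum_egf z)).tsum_eq

theorem hasDerivAt_sipPoissonKernel (hf : ExpBounded f) (z : ℝ) :
    HasDerivAt (sipPoissonKernel f) (sipPoissonKernel (Δ_[1] f) z) z := by
  rw [sipPoissonKernel_eq_exp_mul_egf, hf.egf_fwdDiff]
  exact ((hasDerivAt_neg z).exp.mul (hf.hasDerivAt_egf z)).congr_deriv (by ring)

theorem deriv_sipPoissonKernel (hf : ExpBounded f) :
    deriv (sipPoissonKernel f) = sipPoissonKernel (Δ_[1] f) :=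
  funext fun z ↦ (hf.hasDerivAt_sipPoissonKernel z).deriv

theorem egf_sipBoundaryGen (s α γ : ℝ) (hf : ExpBounded f) (z : ℝ) :
    egf (sipBoundaryGen s α γ f) z = 2 * s * α * egf (Δ_[1] f) z
      + α * z * egf (Δ_[1] (Δ_[1] f)) z - (γ - α) * z * egf (Δ_[1] f) z := by
  have hsum := (((hf.fwdDiff.hasSum_egf z).mul_left (2 * s * α)).add
    ((hasSum_natCast_mul_pred_of_hasSum (hf.fwdDiff.fwdDiff.hasSum_egf z)).mul_left α)).sub
    ((hasSum_natCast_mul_pred_of_hasSum (hf.fwdDiff.hasSum_egf z)).mul_left (γ - α))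
  simp only [← mul_assoc] at hsum
  refine (tsum_congr fun n ↦ ?_).trans hsum.tsum_eq
  rw [sipBoundaryGen_eq]
  ring

end ExpBounded

theorem sip_bep_boundary_intertwining_general (s α γ : ℝ)
    (f : ℕ → ℝ) (C R : ℝ) (hf : ∀ n, |f n| ≤ C * R ^ n) :
    (∀ z : ℝ, 0 < z →
      DifferentiableAt ℝ (sipPoissonKernel f) z ∧
      DifferentiableAt ℝ (deriv (sipPoissonKernel f)) z) ∧
    (∀ z : ℝ, 0 < z →
      sipPoissonKernel (sipBoundaryGen s α γ f) z
        = α * z * deriv (deriv (sipPoissonKernel f)) z +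
          (2 * s * α - (γ - α) * z) * deriv (sipPoissonKernel f) z) := by
  have hf : ExpBounded f := ⟨C, R, hf⟩
  have hderiv := hf.deriv_sipPoissonKernel
  have hderiv2 := hf.fwdDiff.deriv_sipPoissonKernel
  refine ⟨fun z _ ↦ ⟨(hf.hasDerivAt_sipPoissonKernel z).differentiableAt, ?_⟩, fun z _ ↦ ?_⟩
  · rw [hderiv]
    exact (hf.fwdDiff.hasDerivAt_sipPoissonKernel z).differentiableAt
  · simp only [hderiv, hderiv2, sipPoissonKernel_eq_exp_mul_egf, hf.egf_sipBoundaryGen]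
    ring

/-- The boundary generator of the symmetric inclusion process is Poisson-intertwined with
the boundary generator of the Brownian energy process
`𝓛^{α,γ} = α z ∂_z² + (2sα − (γ−α)z) ∂_z`. -/
theorem sip_bep_boundary_intertwining (s α γ : ℝ) (hs : 0 < s) (hα : 0 ≤ α) (hγ : 0 ≤ γ)
    (f : ℕ → ℝ) (C R : ℝ) (hC : 0 < C) (hR : 0 < R) (hf : ∀ n, |f n| ≤ C * R ^ n) :
    (∀ z : ℝ, 0 < z →
      DifferentiableAt ℝ (sipPoissonKernel f) z ∧
      DifferentiableAt ℝ (deriv (sipPoissonKernel f)) z) ∧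
    (∀ z : ℝ, 0 < z →
      sipPoissonKernel (sipBoundaryGen s α γ f) z
        = α * z * deriv (deriv (sipPoissonKernel f)) z +
          (2 * s * α - (γ - α) * z) * deriv (sipPoissonKernel f) z) :=
  sip_bep_boundary_intertwining_general s α γ f C R hf
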